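/- arXiv:2106.09687 — 9 statements merged into one kernel-verified Lean document; each statement's English description precedes it below -/
import Mathlib

section
/- Let 0 ≤ R < 1 be fixed and for κ ∈ (0,1) set ρ(κ) = (1+κ)/(1-κ) and m(κ) = ((√(ρ(κ)² - R²) - √(ρ(κ)² - 1))/√(1 - R²))². Then √(m(κ)) = 1 - 2√κ/√(1-R²) + o(√κ) as κ → 0⁺. -/
/-!
In the variable `s = √κ` one has `√(ρ² - 1) = u(s) := 2s/(1 - s²)` and `ρ² - R² = (1 - R²) + u²`,
so `√m = (√(1 - R² + u²) - u) / √(1 - R²)` is a smooth function of `s`. It equals `1` at `s = 0`,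
and since `u(0) = 0`, `u'(0) = 2` and `√(c + u²) - u` has derivative `-1` at `u = 0`, its derivative
there is `-2 / √(1 - R²)`. The claimed expansion is the first-order Taylor expansion in `s`.
-/

open Filter Topology

theorem HasDerivAt.tendsto_sub_sub_mul_div_self {f : ℝ → ℝ} {f' x : ℝ} (hf : HasDerivAt f f' x) :
    Tendsto (fun t => (f t - f x - f' * (t - x)) / (t - x)) (𝓝 x) (𝓝 0) := by
  simpa only [smul_eq_mul, mul_comm f'] using
    (hasDerivAt_iff_isLittleO.mp hf).tendsto_div_nhds_zero

namespace TwoCycleHeavyBall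

theorem one_add_div_one_sub_sq_sub_one {s : ℝ} (hs : s ^ 2 ≠ 1) :
    ((1 + s ^ 2) / (1 - s ^ 2)) ^ 2 - 1 = (2 * s / (1 - s ^ 2)) ^ 2 := by
  have : 1 - s ^ 2 ≠ 0 := sub_ne_zero.mpr hs.symm
  field_simp
  ring

/-- `√m(κ)` at `κ = s²`. -/
noncomputable def sqrtMomentum (R s : ℝ) : ℝ :=
  (√(1 - R ^ 2 + (2 * s / (1 - s ^ 2)) ^ 2) - 2 * s / (1 - s ^ 2)) / √(1 - R ^ 2)

theorem sqrt_momentum_eq_sqrtMomentum {R s : ℝ} (hR : R ^ 2 ≤ 1) (hs0 : 0 ≤ s) (hs1 : s ^ 2 < 1) :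
    √(((√(((1 + s ^ 2) / (1 - s ^ 2)) ^ 2 - R ^ 2)
        - √(((1 + s ^ 2) / (1 - s ^ 2)) ^ 2 - 1)) / √(1 - R ^ 2)) ^ 2)
      = sqrtMomentum R s := by
  set u := 2 * s / (1 - s ^ 2)
  have hu : 0 ≤ u := div_nonneg (by positivity) (by linarith)
  have hρ := one_add_div_one_sub_sq_sub_one hs1.ne
  have hρR : ((1 + s ^ 2) / (1 - s ^ 2)) ^ 2 - R ^ 2 = 1 - R ^ 2 + u ^ 2 := by
    linear_combination hρ
  have hu_le : u ≤ √(1 - R ^ 2 + u ^ 2) := Real.le_sqrt_of_sq_le (by linarith)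
  rw [hρR, hρ, Real.sqrt_sq hu, Real.sqrt_sq (div_nonneg (by linarith) (Real.sqrt_nonneg _))]
  rfl

theorem sqrtMomentum_zero {R : ℝ} (hR : R ^ 2 < 1) : sqrtMomentum R 0 = 1 := by
  have : 0 < √(1 - R ^ 2) := Real.sqrt_pos.mpr (by linarith)
  simp [sqrtMomentum, this.ne']

theorem hasDerivAt_sqrt_add_sq_sub {c : ℝ} (hc : 0 < c) :
    HasDerivAt (fun u : ℝ => √(c + u ^ 2) - u) (-1) 0 := by
  have h := ((((hasDerivAt_id' (0 : ℝ)).fun_pow 2).const_add c).sqrt (by simpa using hc.ne')).fun_sub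
    (hasDerivAt_id' 0)
  simpa using h

theorem hasDerivAt_two_mul_div_one_sub_sq :
    HasDerivAt (fun s : ℝ => 2 * s / (1 - s ^ 2)) 2 0 := by
  have h := ((hasDerivAt_id' (0 : ℝ)).const_mul 2).fun_div
    (((hasDerivAt_id' (0 : ℝ)).fun_pow 2).const_sub 1) (by norm_num)
  simpa using h

theorem hasDerivAt_sqrtMomentum {R : ℝ} (hR : R ^ 2 < 1) :
    HasDerivAt (sqrtMomentum R) (-2 / √(1 - R ^ 2)) 0 := by
  have h := (hasDerivAt_sqrt_add_sq_sub (c := 1 - R ^ 2) (by linarith)).comp_of_eq (0 : ℝ)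
    hasDerivAt_two_mul_div_one_sub_sq (by simp)
  rw [neg_one_mul] at h
  exact h.div_const _

end TwoCycleHeavyBall

open TwoCycleHeavyBall in
theorem stmt2 (R : ℝ) (hR0 : 0 ≤ R) (hR1 : R < 1) :
    Filter.Tendsto
      (fun κ : ℝ =>
        (Real.sqrt (((Real.sqrt (((1 + κ) / (1 - κ))^2 - R^2)
            - Real.sqrt (((1 + κ) / (1 - κ))^2 - 1)) / Real.sqrt (1 - R^2))^2)
          - 1 + 2 * Real.sqrt κ / Real.sqrt (1 - R^2)) / Real.sqrt κ)
      (nhdsWithin 0 (Set.Ioi 0)) (nhds 0) := by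
  have hR : R ^ 2 < 1 := by nlinarith
  have hsqrt : Tendsto Real.sqrt (𝓝[>] 0) (𝓝 0) := by
    simpa using (Real.continuous_sqrt.tendsto 0).mono_left nhdsWithin_le_nhds
  refine ((hasDerivAt_sqrtMomentum hR).tendsto_sub_sub_mul_div_self.comp hsqrt).congr' ?_
  filter_upwards [Ioo_mem_nhdsGT (show (0 : ℝ) < 1 by norm_num)] with κ ⟨hκ0, hκ1⟩
  have hs : √κ ^ 2 = κ := Real.sq_sqrt hκ0.le
  have hm := sqrt_momentum_eq_sqrtMomentum hR.le (Real.sqrt_nonneg κ) (by rwa [hs])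
  rw [hs] at hm
  simp only [Function.comp, hm, sqrtMomentum_zero hR, sub_zero]
  ring
end

section
/- Let m ∈ (0,1) and h₀, h₁ > 0, and define the polynomials P_t by P₀ = 1, P₁(λ) = 1 - h₀λ/(1+m), P_{2n+1}(λ) = (1+m - h₀λ)P_{2n}(λ) - m P_{2n-1}(λ), P_{2n+2}(λ) = (1+m - h₁λ)P_{2n+1}(λ) - m P_{2n}(λ). Then the rescaled polynomials Q_t := P_t / (√m)^t satisfy, for all n ≥ 1, Q_{2n+2}(λ) = 2σ(λ) Q_{2n}(λ) - Q_{2n-2}(λ), where σ(λ) = 2·((1+m-λh₀)/(2√m))·((1+m-λh₁)/(2√m)) - 1. -/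
lemma aux_stmt6 (s t p q r A B : ℝ) (hs : s ≠ 0) (ht : t ≠ 0)
    (hkey : r = (A * B - 2 * (s * s)) * q - (s * s) ^ 2 * p) :
    r / (s * s * (s * s * t)) =
      2 * (2 * (A / (2 * s)) * (B / (2 * s)) - 1) * (q / (s * s * t)) - p / t := by
  subst hkey
  field_simp

theorem stmt6 (m h₀ h₁ : ℝ) (hm0 : 0 < m) (hm1 : m < 1) (hh0 : 0 < h₀) (hh1 : 0 < h₁)
    (P : ℕ → ℝ → ℝ)
    (hP0 : ∀ x : ℝ, P 0 x = 1)
    (hP1 : ∀ x : ℝ, P 1 x = 1 - h₀ * x / (1 + m))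
    (hodd : ∀ n : ℕ, 1 ≤ n → ∀ x : ℝ,
      P (2*n+1) x = (1 + m - h₀ * x) * P (2*n) x - m * P (2*n-1) x)
    (heven : ∀ n : ℕ, ∀ x : ℝ,
      P (2*n+2) x = (1 + m - h₁ * x) * P (2*n+1) x - m * P (2*n) x) :
    ∀ n : ℕ, 1 ≤ n → ∀ x : ℝ,
      P (2*n+2) x / (Real.sqrt m)^(2*n+2) =
        2 * (2 * ((1 + m - x * h₀) / (2 * Real.sqrt m)) * ((1 + m - x * h₁) / (2 * Real.sqrt m)) - 1)
          * (P (2*n) x / (Real.sqrt m)^(2*n))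
        - P (2*n-2) x / (Real.sqrt m)^(2*n-2) := by
  rintro n hn x
  obtain ⟨k, rfl⟩ := Nat.exists_eq_add_of_le hn
  set s := Real.sqrt m with hsdef
  have hs : s ≠ 0 := by positivity
  have hsq : s * s = m := Real.mul_self_sqrt hm0.le
  have e1 : 2 * (1 + k) - 1 = 2 * k + 1 := by omega
  have e2 : 2 * (1 + k) - 2 = 2 * k := by omega
  have h1 := hodd (1 + k) (by omega) x
  rw [e1] at h1
  have h2 := heven k x
  have h3 := heven (1 + k) x
  have key : P (2 * (1 + k) + 2) x
      = ((1 + m - x * h₀) * (1 + m - x * h₁) - 2 * (s * s)) * P (2 * (1 + k)) x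
        - (s * s) ^ 2 * P (2 * k) x := by
    have hB : (1 + m - h₁ * x) * P (2 * k + 1) x = P (2 * k + 2) x + m * P (2 * k) x := by
      rw [h2]; ring
    have hk1 : 2 * (1 + k) + 1 = 2 * k + 3 := by omega
    have hk0 : 2 * (1 + k) = 2 * k + 2 := by omega
    rw [hk1] at h1 h3
    rw [hk0] at h1 h3 ⊢
    rw [h3, h1, hsq]
    nlinarith [hB]
  have hp : s ^ (2 * (1 + k) + 2) = s * s * (s * s * s ^ (2 * k)) := by
    have : 2 * (1 + k) + 2 = 2 * k + 4 := by omega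
    rw [this]; ring
  have hp2 : s ^ (2 * (1 + k)) = s * s * s ^ (2 * k) := by
    have : 2 * (1 + k) = 2 * k + 2 := by omega
    rw [this]; ring
  rw [e2, hp, hp2]
  exact aux_stmt6 s (s ^ (2 * k)) (P (2 * k) x) (P (2 * (1 + k)) x) (P (2 * (1 + k) + 2) x)
    (1 + m - x * h₀) (1 + m - x * h₁) hs (pow_ne_zero _ hs) key
end

section
/- Let μ₁ < L₁ ≤ μ₂ < L₂ be positive reals with L₁ - μ₁ = L₂ - μ₂. There exists a (unique) degree-2 real polynomial σ with σ(μ₁) = σ(L₂) = 1 and σ(L₁) = σ(μ₂) = -1, given by σ(λ) = 2·((ρ² - R²)/(1 - R²))·(1 - λ/L₁)(1 - λ/μ₂) - 1, where ρ = (L₂+μ₁)/(L₂-μ₁) and R = (μ₂-L₁)/(L₂-μ₁). -/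
theorem stmt11 (μ₁ L₁ μ₂ L₂ : ℝ) (h0 : 0 < μ₁) (h1 : μ₁ < L₁) (h2 : L₁ ≤ μ₂) (h3 : μ₂ < L₂)
    (hsize : L₁ - μ₁ = L₂ - μ₂) :
    letI ρ : ℝ := (L₂ + μ₁) / (L₂ - μ₁)
    letI R : ℝ := (μ₂ - L₁) / (L₂ - μ₁)
    letI σ : ℝ → ℝ := fun x => 2 * ((ρ^2 - R^2) / (1 - R^2)) * (1 - x / L₁) * (1 - x / μ₂) - 1
    (σ μ₁ = 1 ∧ σ L₁ = -1 ∧ σ μ₂ = -1 ∧ σ L₂ = 1) ∧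
      ∀ a b c : ℝ,
        a * μ₁^2 + b * μ₁ + c = 1 → a * L₁^2 + b * L₁ + c = -1 →
        a * μ₂^2 + b * μ₂ + c = -1 → a * L₂^2 + b * L₂ + c = 1 →
        ∀ x : ℝ, a * x^2 + b * x + c = σ x := by
  have hμ2 : μ₂ = μ₁ + L₂ - L₁ := by linarith
  subst hμ2
  have hL1 : (0:ℝ) < L₁ := by linarith
  have hμ2p : (0:ℝ) < μ₁ + L₂ - L₁ := by linarith
  have hd : (0:ℝ) < L₂ - μ₁ := by linarith
  have ha1 : (0:ℝ) < L₁ - μ₁ := by linarith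
  have ha2 : (0:ℝ) < L₂ - L₁ := by linarith
  have hR : 1 - ((μ₁ + L₂ - L₁ - L₁) / (L₂ - μ₁))^2 =
      4 * (L₁ - μ₁) * (L₂ - L₁) / (L₂ - μ₁)^2 := by
    field_simp
    ring
  have hK : (((L₂ + μ₁) / (L₂ - μ₁))^2 - ((μ₁ + L₂ - L₁ - L₁) / (L₂ - μ₁))^2) /
      (1 - ((μ₁ + L₂ - L₁ - L₁) / (L₂ - μ₁))^2) =
      L₁ * (μ₁ + L₂ - L₁) / ((L₁ - μ₁) * (L₂ - L₁)) := by
    rw [hR]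
    field_simp
    ring
  refine ⟨⟨?_, ?_, ?_, ?_⟩, ?_⟩
  · simp only [hK]; field_simp; try ring
  · simp only [hK]; field_simp; try ring
  · simp only [hK]; field_simp; try ring
  · simp only [hK]; field_simp; try ring
  · intro a b c e1 e2 e3 e4 x
    simp only [hK]
    set K : ℝ := L₁ * (μ₁ + L₂ - L₁) / ((L₁ - μ₁) * (L₂ - L₁)) with hKdef
    set A : ℝ := 2 * K / (L₁ * (μ₁ + L₂ - L₁)) with hAdef
    set B : ℝ := -(2 * K) * (1 / L₁ + 1 / (μ₁ + L₂ - L₁)) with hBdef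
    set C : ℝ := 2 * K - 1 with hCdef
    have hexp : ∀ y : ℝ, 2 * K * (1 - y / L₁) * (1 - y / (μ₁ + L₂ - L₁)) - 1
        = A * y ^ 2 + B * y + C := by
      intro y
      rw [hAdef, hBdef, hCdef]
      field_simp
      ring
    have hEμ₁ : A * μ₁ ^ 2 + B * μ₁ + C = 1 := by
      rw [← hexp μ₁, hKdef]; field_simp; try ring
    have hEL₁ : A * L₁ ^ 2 + B * L₁ + C = -1 := by
      rw [← hexp L₁, hKdef]; field_simp; try ring
    have hEL₂ : A * L₂ ^ 2 + B * L₂ + C = 1 := by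
      rw [← hexp L₂, hKdef]; field_simp; try ring
    have d1 : (a - A) * (L₁ + μ₁) + (b - B) = 0 := by
      have h' : (L₁ - μ₁) * ((a - A) * (L₁ + μ₁) + (b - B)) = 0 := by
        linear_combination e2 - hEL₁ - e1 + hEμ₁
      exact (mul_eq_zero.mp h').resolve_left ha1.ne'
    have d2 : (a - A) * (L₂ + L₁) + (b - B) = 0 := by
      have h' : (L₂ - L₁) * ((a - A) * (L₂ + L₁) + (b - B)) = 0 := by
        linear_combination e4 - hEL₂ - e2 + hEL₁
      exact (mul_eq_zero.mp h').resolve_left ha2.ne'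
    have hu : a - A = 0 := by
      have h' : (L₂ - μ₁) * (a - A) = 0 := by linear_combination d2 - d1
      exact (mul_eq_zero.mp h').resolve_left hd.ne'
    have hv : b - B = 0 := by linear_combination d1 - (L₁ + μ₁) * hu
    have hw : c - C = 0 := by linear_combination e1 - hEμ₁ - μ₁ ^ 2 * hu - μ₁ * hv
    rw [hexp x]
    linear_combination x ^ 2 * hu + x * hv + hw
end

section
/- Let R(κ) = 1 - √κ/2 for κ ∈ (0,1), ρ(κ) = (1+κ)/(1-κ), and m(κ) = ((√(ρ(κ)²-R(κ)²) - √(ρ(κ)²-1))/√(1-R(κ)²))². Then √(m(κ)) = 1 - 2κ^{1/4} + o(κ^{1/4}) as κ → 0⁺. -/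
open Filter Real Set

noncomputable def Hfun (t : ℝ) : ℝ :=
  (4*t/((1-t^4)^2*(Real.sqrt (1 - t^2/4 + 4*t^2/(1-t^4)^2) + Real.sqrt (1 - t^2/4)))
    - 2/(1-t^4)) / Real.sqrt (1 - t^2/4) + 2

lemma Hfun_eq {t : ℝ} (ht : 0 < t) (ht1 : t < 1) :
    (Real.sqrt ((((Real.sqrt (((1 + t^4) / (1 - t^4))^2 - (1 - t^2 / 2)^2)
            - Real.sqrt (((1 + t^4) / (1 - t^4))^2 - 1))
              / Real.sqrt (1 - (1 - t^2 / 2)^2))^2)) - 1 + 2 * t) / t = Hfun t := by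
  have h14 : (0:ℝ) < 1 - t^4 := by
    have := pow_lt_one₀ ht.le ht1 (n := 4) (by norm_num)
    linarith
  have hA : (0:ℝ) < 1 - t^2/4 := by nlinarith
  set N := Real.sqrt (1 - t^2/4) with hN
  set M := Real.sqrt (1 - t^2/4 + 4*t^2/(1-t^4)^2) with hM
  have hNpos : 0 < N := Real.sqrt_pos.mpr hA
  have hN2 : N^2 = 1 - t^2/4 := Real.sq_sqrt hA.le
  have hMarg : (0:ℝ) < 1 - t^2/4 + 4*t^2/(1-t^4)^2 := by positivity
  have hMpos : 0 < M := Real.sqrt_pos.mpr hMarg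
  have hM2 : M^2 = 1 - t^2/4 + 4*t^2/(1-t^4)^2 := Real.sq_sqrt hMarg.le
  have e1 : ((1 + t^4) / (1 - t^4))^2 - (1 - t^2 / 2)^2
      = t^2 * (1 - t^2/4 + 4*t^2/(1-t^4)^2) := by
    field_simp
    ring
  have e2 : ((1 + t^4) / (1 - t^4))^2 - 1 = (2*t^2/(1-t^4))^2 := by
    field_simp
    ring
  have e3 : 1 - (1 - t^2 / 2)^2 = t^2 * (1 - t^2/4) := by ring
  have s1 : Real.sqrt (((1 + t^4) / (1 - t^4))^2 - (1 - t^2 / 2)^2) = t * M := by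
    rw [e1, Real.sqrt_mul (sq_nonneg t), Real.sqrt_sq ht.le, hM]
  have s2 : Real.sqrt (((1 + t^4) / (1 - t^4))^2 - 1) = 2*t^2/(1-t^4) := by
    rw [e2, Real.sqrt_sq (by positivity)]
  have s3 : Real.sqrt (1 - (1 - t^2 / 2)^2) = t * N := by
    rw [e3, Real.sqrt_mul (sq_nonneg t), Real.sqrt_sq ht.le, hN]
  rw [s1, s2, s3]
  have hMgt : 2*t/(1-t^4) < M := by
    have h1 : M^2 - (2*t/(1-t^4))^2 = 1 - t^2/4 := by
      rw [hM2, div_pow]; ring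
    nlinarith [sq_nonneg (M - 2*t/(1-t^4)), div_nonneg (by positivity : (0:ℝ) ≤ 2*t) h14.le]
  have hx : 0 ≤ (t * M - 2*t^2/(1-t^4)) / (t * N) := by
    apply div_nonneg _ (by positivity)
    have h2 : 2*t^2/(1-t^4) = t * (2*t/(1-t^4)) := by ring
    nlinarith [mul_lt_mul_of_pos_left hMgt ht]
  rw [Real.sqrt_sq hx, Hfun, ← hN, ← hM]
  have hMN : 0 < M + N := by linarith
  have hM2' : M^2 * (1-t^4)^2 = (1 - t^2/4)*(1-t^4)^2 + 4*t^2 := by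
    rw [hM2]; field_simp
  have key : (M - N) * ((1-t^4)^2 * (M+N)) = 4*t^2 := by
    linear_combination hM2' - (1-t^4)^2 * hN2
  have key2 : 4*t/((1-t^4)^2*(M+N)) = (M-N)/t := by
    rw [div_eq_div_iff (by positivity) ht.ne']
    linear_combination -key
  rw [key2]
  field_simp
  ring
lemma Hfun_zero : Hfun 0 = 0 := by
  simp [Hfun]

lemma Hfun_cont : ContinuousAt Hfun 0 := by
  have hs : ContinuousAt (fun t : ℝ => Real.sqrt (1 - t^2/4)) 0 := by
    apply Real.continuous_sqrt.continuousAt.comp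
    fun_prop
  have hd1 : ContinuousAt (fun t : ℝ => (1 - t^4)) 0 := by fun_prop
  have hM : ContinuousAt (fun t : ℝ => Real.sqrt (1 - t^2/4 + 4*t^2/(1-t^4)^2)) 0 := by
    apply Real.continuous_sqrt.continuousAt.comp
    apply ContinuousAt.add (by fun_prop)
    apply ContinuousAt.div (by fun_prop) (by fun_prop)
    norm_num
  apply ContinuousAt.add _ continuousAt_const
  apply ContinuousAt.div _ hs (by norm_num)
  apply ContinuousAt.sub
  · apply ContinuousAt.div (by fun_prop)
    · exact (hd1.pow 2).mul (hM.add hs)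
    · norm_num
  · exact ContinuousAt.div continuousAt_const hd1 (by norm_num)
theorem stmt14 :
    Filter.Tendsto
      (fun κ : ℝ =>
        (Real.sqrt ((((Real.sqrt (((1 + κ) / (1 - κ))^2 - (1 - Real.sqrt κ / 2)^2)
            - Real.sqrt (((1 + κ) / (1 - κ))^2 - 1))
              / Real.sqrt (1 - (1 - Real.sqrt κ / 2)^2))^2))
          - 1 + 2 * κ ^ ((1 : ℝ)/4)) / κ ^ ((1 : ℝ)/4))
      (nhdsWithin 0 (Set.Ioi 0)) (nhds 0) := by
  have hpow : Tendsto (fun κ : ℝ => κ ^ ((1 : ℝ)/4)) (nhdsWithin 0 (Set.Ioi 0)) (nhds 0) := by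
    have h := (Real.continuousAt_rpow_const 0 ((1:ℝ)/4) (Or.inr (by norm_num))).tendsto
    rw [Real.zero_rpow (by norm_num)] at h
    exact h.mono_left nhdsWithin_le_nhds
  have hlim : Tendsto (fun κ : ℝ => Hfun (κ ^ ((1 : ℝ)/4)))
      (nhdsWithin 0 (Set.Ioi 0)) (nhds 0) := by
    have h := Hfun_cont.tendsto
    rw [Hfun_zero] at h
    exact h.comp hpow
  apply hlim.congr'
  filter_upwards [Ioo_mem_nhdsGT_of_mem (by constructor <;> norm_num : (0:ℝ) ∈ Set.Ico 0 1)]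
    with κ hκ
  set t := κ ^ ((1 : ℝ)/4) with hts
  have ht : 0 < t := Real.rpow_pos_of_pos hκ.1 _
  have ht1 : t < 1 := Real.rpow_lt_one hκ.1.le hκ.2 (by norm_num)
  have ht4 : κ = t ^ 4 := by
    rw [hts, ← Real.rpow_natCast (κ ^ ((1:ℝ)/4)) 4, ← Real.rpow_mul hκ.1.le]
    norm_num
  have hst : Real.sqrt κ = t ^ 2 := by
    rw [Real.sqrt_eq_rpow, hts, ← Real.rpow_natCast (κ ^ ((1:ℝ)/4)) 2, ← Real.rpow_mul hκ.1.le]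
    norm_num
  rw [hst]
  rw [ht4]
  exact (Hfun_eq ht ht1).symm
end

section
/- Fix γ > 0, let R(κ) = 1 - 2γκ, ρ(κ) = (1+κ)/(1-κ), and m(κ) = ((√(ρ(κ)²-R(κ)²) - √(ρ(κ)²-1))/√(1-R(κ)²))². Then √(m(κ)) → √(1 + 1/γ) - √(1/γ) as κ → 0⁺. -/
theorem stmt15 (γ : ℝ) (hγ : 0 < γ) :
    Filter.Tendsto
      (fun κ : ℝ =>
        Real.sqrt ((((Real.sqrt (((1 + κ) / (1 - κ))^2 - (1 - 2 * γ * κ)^2)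
            - Real.sqrt (((1 + κ) / (1 - κ))^2 - 1))
              / Real.sqrt (1 - (1 - 2 * γ * κ)^2))^2)))
      (nhdsWithin 0 (Set.Ioi 0))
      (nhds (Real.sqrt (1 + 1/γ) - Real.sqrt (1/γ))) := by
  set g : ℝ → ℝ := fun κ =>
    (Real.sqrt (1/(1-κ)^2 + γ*(1-γ*κ)) - 1/(1-κ)) / Real.sqrt (γ*(1-γ*κ)) with hgdef
  -- the limit value
  have hval : Real.sqrt ((g 0)^2) = Real.sqrt (1 + 1/γ) - Real.sqrt (1/γ) := by
    have h0 : g 0 = (Real.sqrt (1+γ) - 1) / Real.sqrt γ := by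
      simp [hgdef]
    have hge : (0:ℝ) ≤ (Real.sqrt (1+γ) - 1) / Real.sqrt γ := by
      apply div_nonneg _ (Real.sqrt_nonneg _)
      have h := Real.sqrt_le_sqrt (show (1:ℝ) ≤ 1+γ by linarith)
      rw [Real.sqrt_one] at h
      linarith
    rw [h0, Real.sqrt_sq hge]
    have h1 : (1:ℝ) + 1/γ = (1+γ)/γ := by field_simp; ring
    rw [h1, Real.sqrt_div (by linarith) γ, show (1:ℝ)/γ = 1/γ from rfl]
    rw [show (1:ℝ)/γ = (1:ℝ)/γ from rfl, Real.sqrt_div (by norm_num : (0:ℝ) ≤ 1) γ]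
    simp [sub_div]
  have key : Filter.Tendsto (fun κ => Real.sqrt ((g κ)^2))
      (nhdsWithin 0 (Set.Ioi 0)) (nhds (Real.sqrt (1 + 1/γ) - Real.sqrt (1/γ))) := by
    rw [← hval]
    have hc : ContinuousAt (fun κ => Real.sqrt ((g κ)^2)) 0 := by
      apply Real.continuous_sqrt.continuousAt.comp
      apply ContinuousAt.pow
      apply ContinuousAt.div
      · apply ContinuousAt.sub
        · apply Real.continuous_sqrt.continuousAt.comp
          apply ContinuousAt.add
          · exact ContinuousAt.div continuousAt_const (by fun_prop) (by norm_num)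
          · fun_prop
        · exact ContinuousAt.div continuousAt_const (by fun_prop) (by norm_num)
      · exact Real.continuous_sqrt.continuousAt.comp (by fun_prop)
      · norm_num [Real.sqrt_ne_zero', hγ]
    exact (hc.tendsto).mono_left nhdsWithin_le_nhds
  apply key.congr'
  have hmem : Set.Ioo (0:ℝ) (min 1 (1/γ)) ∈ nhdsWithin 0 (Set.Ioi 0) :=
    Ioo_mem_nhdsGT_of_mem ⟨le_refl 0, by positivity⟩
  filter_upwards [hmem] with κ hκ
  obtain ⟨hκ0, hκm⟩ := hκ
  have hκ1 : κ < 1 := lt_of_lt_of_le hκm (min_le_left _ _)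
  have hκγ : γ * κ < 1 := by
    have := lt_of_lt_of_le hκm (min_le_right _ _)
    rwa [lt_div_iff₀ hγ, mul_comm] at this
  have h1κ : (0:ℝ) < 1 - κ := by linarith
  have h2 : (0:ℝ) < 1 - γ*κ := by linarith
  set s := Real.sqrt κ with hs
  have hs0 : 0 < s := Real.sqrt_pos.mpr hκ0
  have hs2 : s^2 = κ := Real.sq_sqrt hκ0.le
  set X := 1/(1-κ)^2 + γ*(1-γ*κ) with hX
  set Y := γ*(1-γ*κ) with hY
  have hXpos : 0 < X := by positivity
  have hYpos : 0 < Y := by positivity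
  have hA : ((1+κ)/(1-κ))^2 - (1-2*γ*κ)^2 = (2*s*Real.sqrt X)^2 := by
    have h : (2*s*Real.sqrt X)^2 = 4*κ*X := by
      rw [mul_pow, mul_pow, Real.sq_sqrt hXpos.le, hs2]; ring
    rw [h, hX]
    field_simp
    ring
  have hB : ((1+κ)/(1-κ))^2 - 1 = (2*s*(1/(1-κ)))^2 := by
    rw [mul_pow, mul_pow, hs2]
    field_simp
    ring
  have hC : 1 - (1-2*γ*κ)^2 = (2*s*Real.sqrt Y)^2 := by
    have h : (2*s*Real.sqrt Y)^2 = 4*κ*Y := by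
      rw [mul_pow, mul_pow, Real.sq_sqrt hYpos.le, hs2]; ring
    rw [h, hY]; ring
  have hquot : (2*s*Real.sqrt X - 2*s*(1/(1-κ))) / (2*s*Real.sqrt Y)
      = (Real.sqrt X - 1/(1-κ)) / Real.sqrt Y := by
    have hYs : 0 < Real.sqrt Y := Real.sqrt_pos.mpr hYpos
    rw [div_eq_div_iff (by positivity) hYs.ne']
    ring
  have hbig : (Real.sqrt (((1 + κ) / (1 - κ))^2 - (1 - 2 * γ * κ)^2)
      - Real.sqrt (((1 + κ) / (1 - κ))^2 - 1)) / Real.sqrt (1 - (1 - 2 * γ * κ)^2) = g κ := by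
    rw [show ((1 + κ) / (1 - κ))^2 - (1 - 2 * γ * κ)^2 = ((1+κ)/(1-κ))^2 - (1-2*γ*κ)^2 by ring_nf,
      hA, hB, hC, Real.sqrt_sq (by positivity), Real.sqrt_sq (by positivity),
      Real.sqrt_sq (by positivity), hquot, hgdef]
  rw [hbig]
end

section
/- Let μ₁ < L₁ ≤ μ₂ < L₂ be positive reals, μ = μ₁, L = L₂, r₁ = (L₁-μ₁)/(L₂-μ₁), r₂ = (L₂-μ₂)/(L₂-μ₁), and suppose there exists x ∈ (μ₁, L₁) and c ≠ 0 with c(λ-x)²(λ-L₂) - c(λ-μ₁)(λ-L₁)(λ-μ₂) = 2 for all λ (i.e., the degree-3 equioscillation conditions hold). Then r₁ = 2√r₂ - r₂. -/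
theorem stmt16 (μ₁ L₁ μ₂ L₂ x c : ℝ) (h0 : 0 < μ₁) (h1 : μ₁ < L₁) (h2 : L₁ ≤ μ₂)
    (h3 : μ₂ < L₂) (hx1 : μ₁ < x) (hx2 : x < L₁) (hc : c ≠ 0)
    (hid : ∀ lam : ℝ,
      c * (lam - x)^2 * (lam - L₂) - c * (lam - μ₁) * (lam - L₁) * (lam - μ₂) = 2) :
    (L₁ - μ₁) / (L₂ - μ₁) =
      2 * Real.sqrt ((L₂ - μ₂) / (L₂ - μ₁)) - (L₂ - μ₂) / (L₂ - μ₁) := by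
  have e0 := hid 0
  have e1 := hid 1
  have em := hid (-1)
  have hca : c * (μ₁ + L₁ + μ₂ - (2*x + L₂)) = 0 := by
    linear_combination (e1 + em)/2 - e0
  have hcb : c * (x^2 + 2*x*L₂ - (μ₁*L₁ + μ₁*μ₂ + L₁*μ₂)) = 0 := by
    linear_combination (e1 - em)/2
  have ha : μ₁ + L₁ + μ₂ - (2*x + L₂) = 0 := by
    rcases mul_eq_zero.mp hca with h | h
    · exact absurd h hc
    · exact h
  have hb : x^2 + 2*x*L₂ - (μ₁*L₁ + μ₁*μ₂ + L₁*μ₂) = 0 := by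
    rcases mul_eq_zero.mp hcb with h | h
    · exact absurd h hc
    · exact h
  have hD : (0:ℝ) < L₂ - μ₁ := by linarith
  have key : (L₁ - x)^2 = (L₂ - μ₂) * (L₂ - μ₁) := by
    linear_combination hb + (L₁ + L₂) * ha
  have hsq : Real.sqrt ((L₂ - μ₂) / (L₂ - μ₁)) = (L₁ - x) / (L₂ - μ₁) := by
    have h' : (L₂ - μ₂) / (L₂ - μ₁) = ((L₁ - x) / (L₂ - μ₁))^2 := by
      rw [div_pow, key, sq]
      rw [mul_div_mul_right _ _ (ne_of_gt hD)]
    rw [h', Real.sqrt_sq (div_nonneg (by linarith) (by linarith))]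
  rw [hsq]
  field_simp
  linarith [ha]
end

section
/- Let R ∈ [0,1) and for κ ∈ (0,1) define σ₀(κ) = 1 + 2κ(9-R²)/(1-R²). Then (σ₀(κ) - √(σ₀(κ)²-1))^{1/3} = 1 - 2√κ·√((1-R²/9)/(1-R²)) + o(√κ) as κ → 0⁺. -/
theorem stmt17 (R : ℝ) (hR0 : 0 ≤ R) (hR1 : R < 1) :
    Filter.Tendsto
      (fun κ : ℝ =>
        (((1 + 2 * κ * (9 - R^2) / (1 - R^2))
            - Real.sqrt ((1 + 2 * κ * (9 - R^2) / (1 - R^2))^2 - 1)) ^ ((1 : ℝ)/3)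
          - 1 + 2 * Real.sqrt κ * Real.sqrt ((1 - R^2/9) / (1 - R^2))) / Real.sqrt κ)
      (nhdsWithin 0 (Set.Ioi 0)) (nhds 0) := by
  have hR2 : R^2 < 1 := by nlinarith
  set a : ℝ := (9 - R^2) / (1 - R^2) with ha_def
  have ha : 0 < a := by
    apply div_pos <;> nlinarith
  -- the rescaled function
  set h : ℝ → ℝ := fun t => (Real.sqrt (1 + a*t^2) - Real.sqrt a * t) ^ ((2:ℝ)/3) with hh_def
  -- derivative of h at 0
  have hinner : HasDerivAt (fun t : ℝ => 1 + a*t^2) 0 0 := by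
    simpa using ((hasDerivAt_pow 2 (0:ℝ)).const_mul a).const_add 1
  have hsq : HasDerivAt (fun t : ℝ => Real.sqrt (1 + a*t^2)) 0 0 := by
    simpa using hinner.sqrt (by norm_num : (1:ℝ) + a*0^2 ≠ 0)
  have hlin : HasDerivAt (fun t : ℝ => Real.sqrt a * t) (Real.sqrt a) 0 := by
    simpa using (hasDerivAt_id (0:ℝ)).const_mul (Real.sqrt a)
  have hu : HasDerivAt (fun t : ℝ => Real.sqrt (1 + a*t^2) - Real.sqrt a * t)
      (0 - Real.sqrt a) 0 := hsq.sub hlin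
  have hval : Real.sqrt (1 + a*(0:ℝ)^2) - Real.sqrt a * 0 = 1 := by simp
  have hrp : HasDerivAt (fun x : ℝ => x ^ ((2:ℝ)/3))
      (2/3 * (1:ℝ) ^ ((2:ℝ)/3 - 1)) 1 :=
    Real.hasDerivAt_rpow_const (Or.inl one_ne_zero)
  have hh : HasDerivAt h (-(2 * Real.sqrt a / 3)) 0 := by
    have hrp2 : HasDerivAt (fun x : ℝ => x ^ ((2:ℝ)/3)) (2/3 * (1:ℝ) ^ ((2:ℝ)/3 - 1))
        (Real.sqrt (1 + a*(0:ℝ)^2) - Real.sqrt a * 0) := by rw [hval]; exact hrp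
    have := hrp2.comp 0 hu
    have h1 : (2/3 * (1:ℝ) ^ ((2:ℝ)/3 - 1)) * (0 - Real.sqrt a) = -(2 * Real.sqrt a / 3) := by
      rw [Real.one_rpow]; ring
    rw [h1] at this
    exact this
  -- slope limit
  have hslope : Filter.Tendsto (fun t => (h t - 1)/t + 2 * Real.sqrt a / 3)
      (nhdsWithin 0 (Set.Ioi 0)) (nhds 0) := by
    have hs := hasDerivAt_iff_tendsto_slope.mp hh
    have hs' : Filter.Tendsto (slope h 0) (nhdsWithin 0 (Set.Ioi 0))
        (nhds (-(2 * Real.sqrt a / 3))) :=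
      hs.mono_left (nhdsWithin_mono _ (fun x hx => ne_of_gt hx))
    have := hs'.add (tendsto_const_nhds (x := 2 * Real.sqrt a / 3))
    rw [neg_add_cancel] at this
    refine this.congr (fun t => ?_)
    have h0 : h 0 = 1 := by simp [hh_def]
    rw [slope_def_field, h0, sub_zero]
  -- sqrt tends to 0 within Ioi
  have hsqrt : Filter.Tendsto Real.sqrt (nhdsWithin 0 (Set.Ioi 0))
      (nhdsWithin 0 (Set.Ioi 0)) := by
    rw [tendsto_nhdsWithin_iff]
    constructor
    · have := (Real.continuous_sqrt.tendsto' 0 0 Real.sqrt_zero).mono_left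
        (nhdsWithin_le_nhds (s := Set.Ioi (0:ℝ)))
      exact this
    · filter_upwards [self_mem_nhdsWithin] with x hx
      exact Real.sqrt_pos.mpr hx
  have hcomp := hslope.comp hsqrt
  refine hcomp.congr' ?_
  filter_upwards [self_mem_nhdsWithin] with κ hκ
  have hκ0 : (0:ℝ) < κ := hκ
  set s := Real.sqrt κ with hs_def
  have hsκ : 0 < s := Real.sqrt_pos.mpr hκ0
  have hs2 : s^2 = κ := Real.sq_sqrt hκ0.le
  have h2 : Real.sqrt a ^ 2 = a := Real.sq_sqrt ha.le
  have h1a : (0:ℝ) ≤ 1 + a*κ := by positivity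
  have h3 : Real.sqrt (1 + a*κ) ^ 2 = 1 + a*κ := Real.sq_sqrt h1a
  have hA : 1 + 2 * κ * (9 - R^2) / (1 - R^2) = 1 + 2*(a*κ) := by
    rw [ha_def]; ring
  have e1 : (1 + 2*(a*κ))^2 - 1 = (2*s*Real.sqrt a*Real.sqrt (1 + a*κ))^2 := by
    linear_combination (-(4*(Real.sqrt a)^2*(Real.sqrt (1 + a*κ))^2))*hs2
      - 4*κ*(Real.sqrt (1 + a*κ))^2*h2 - 4*κ*a*h3
  have e2 : Real.sqrt ((1 + 2*(a*κ))^2 - 1) = 2*s*Real.sqrt a*Real.sqrt (1 + a*κ) := by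
    rw [e1, Real.sqrt_sq (by positivity)]
  have hv : 0 ≤ Real.sqrt (1 + a*κ) - Real.sqrt a * s := by
    rw [hs_def, ← Real.sqrt_mul ha.le, sub_nonneg]
    exact Real.sqrt_le_sqrt (by nlinarith)
  have e3 : 1 + 2*(a*κ) - 2*s*Real.sqrt a*Real.sqrt (1 + a*κ)
      = (Real.sqrt (1 + a*κ) - Real.sqrt a * s)^2 := by
    linear_combination (-1)*h3 - κ*h2 - (Real.sqrt a)^2*hs2
  have e4 : ((Real.sqrt (1 + a*κ) - Real.sqrt a * s)^2) ^ ((1:ℝ)/3)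
      = (Real.sqrt (1 + a*κ) - Real.sqrt a * s) ^ ((2:ℝ)/3) := by
    rw [← Real.rpow_natCast (Real.sqrt (1 + a*κ) - Real.sqrt a * s) 2,
      ← Real.rpow_mul hv]
    norm_num
  have hc : Real.sqrt ((1 - R^2/9) / (1 - R^2)) = Real.sqrt a / 3 := by
    have hq : (1 - R^2/9) / (1 - R^2) = a * (1/3)^2 := by
      rw [ha_def]; field_simp; ring
    rw [hq, Real.sqrt_mul ha.le, Real.sqrt_sq (by norm_num : (0:ℝ) ≤ 1/3)]
    ring
  show ((h (Real.sqrt κ) - 1) / Real.sqrt κ + 2 * Real.sqrt a / 3) = _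
  rw [hh_def]
  simp only [← hs_def, hs2]
  rw [hA, e2, e3, e4, hc]
  field_simp
end

section
/- Let σ₀ ≥ 1 and σ* > 1 with σ* finite. Then (σ₀ - √(σ₀²-1))·(σ* + √(σ*²-1)) ≥ (σ₀/σ*) - √((σ₀/σ*)² - 1) whenever σ₀/σ* ≥ 1. -/
/-! Writing `x ± √(x² - 1) = exp (± arcosh x)`, the inequality becomes
`arcosh σ₀ ≤ arcosh σ* + arcosh (σ₀ / σ*)`. This holds because `cosh a * cosh b ≤ cosh (a + b)`
for `a, b ≥ 0`, as `sinh a * sinh b ≥ 0`, and `arcosh` is monotone. -/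

namespace Real

theorem exp_neg_arcosh {x : ℝ} (hx : 1 ≤ x) : exp (-arcosh x) = x - √(x ^ 2 - 1) := by
  rw [exp_neg, exp_arcosh hx, add_sqrt_self_sq_sub_one_inv hx]

theorem arcosh_mul_le {x y : ℝ} (hx : 1 ≤ x) (hy : 1 ≤ y) :
    arcosh (x * y) ≤ arcosh x + arcosh y := by
  have ha := arcosh_nonneg hx
  have hb := arcosh_nonneg hy
  have hcosh : x * y ≤ cosh (arcosh x + arcosh y) := by
    rw [cosh_add, cosh_arcosh hx, cosh_arcosh hy, le_add_iff_nonneg_right]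
    exact mul_nonneg (sinh_nonneg_iff.mpr ha) (sinh_nonneg_iff.mpr hb)
  calc arcosh (x * y) ≤ arcosh (cosh (arcosh x + arcosh y)) :=
        (arcosh_le_arcosh (by positivity) (cosh_pos _)).mpr hcosh
    _ = arcosh x + arcosh y := arcosh_cosh (add_nonneg ha hb)

end Real

theorem stmt18 (σ₀ σs : ℝ) (h0 : 1 ≤ σ₀) (hs : 1 < σs) (hq : 1 ≤ σ₀ / σs) :
    (σ₀ - Real.sqrt (σ₀^2 - 1)) * (σs + Real.sqrt (σs^2 - 1))
      ≥ σ₀ / σs - Real.sqrt ((σ₀ / σs)^2 - 1) := by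
  rw [← Real.exp_neg_arcosh h0, ← Real.exp_arcosh hs.le, ← Real.exp_neg_arcosh hq,
    ← Real.exp_add, ge_iff_le, Real.exp_le_exp]
  have h := Real.arcosh_mul_le hq hs.le
  rw [div_mul_cancel₀ σ₀ (by positivity)] at h
  linarith
end

section
/- Let c > 1 and define ω₀ = 2 and ω_{n+1} = 1/(1 - ω_n/(4c²)). Then for all n, ω_n = 2c·T_n(c)/T_{n+1}(c), where T_n is the Chebyshev polynomial of the first kind; in particular ω_n is well-defined (the denominator never vanishes) and ω_n → 1 + (c - √(c²-1))² as n → ∞. -/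
open Polynomial Chebyshev Filter

theorem stmt19 (c : ℝ) (hc : 1 < c) (ω : ℕ → ℝ) (hω0 : ω 0 = 2)
    (hrec : ∀ n, ω (n+1) = 1 / (1 - ω n / (4 * c^2))) :
    (∀ n : ℕ, 1 - ω n / (4 * c^2) ≠ 0) ∧
    (∀ n : ℕ, ω n = 2 * c * (Polynomial.Chebyshev.T ℝ n).eval c
        / (Polynomial.Chebyshev.T ℝ (n+1)).eval c) ∧
    Filter.Tendsto ω Filter.atTop (nhds (1 + (c - Real.sqrt (c^2 - 1))^2)) := by
  have hc0 : 0 < c := lt_trans one_pos hc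
  set s : ℝ := c - Real.sqrt (c^2 - 1) with hs_def
  set r : ℝ := c + Real.sqrt (c^2 - 1) with hr_def
  have hsq : Real.sqrt (c^2 - 1) ^ 2 = c^2 - 1 := by
    rw [Real.sq_sqrt]; nlinarith
  have hrs : r * s = 1 := by
    simp only [hr_def, hs_def]; nlinarith
  have hradd : r + s = 2 * c := by simp [hr_def, hs_def]; ring
  have hs_pos : 0 < s := by
    have : Real.sqrt (c^2 - 1) < c := by
      rw [Real.sqrt_lt' hc0]; nlinarith
    simp only [hs_def]; linarith
  have hs_lt : s < 1 := by
    have : c - 1 < Real.sqrt (c^2 - 1) := by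
      rw [show c - 1 = Real.sqrt ((c-1)^2) by rw [Real.sqrt_sq (by linarith)]]
      apply Real.sqrt_lt_sqrt (by positivity); nlinarith
    simp only [hs_def]; linarith
  have hr_pos : 0 < r := by positivity
  -- closed form for Chebyshev T at c
  have hT : ∀ n : ℕ, (Polynomial.Chebyshev.T ℝ n).eval c = (r^n + s^n) / 2 := by
    intro n
    induction n using Nat.twoStepInduction with
    | zero => simp
    | one =>
      push_cast
      rw [Polynomial.Chebyshev.T_one]
      simp only [Polynomial.eval_X, pow_one]
      rw [hradd]; ring
    | more n ih1 ih2 =>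
      have : ((n : ℤ) + 2) = (n : ℤ) + 1 + 1 := by ring
      push_cast
      rw [show ((n : ℤ) + 2) = ((n : ℤ)) + 2 by ring, Polynomial.Chebyshev.T_add_two]
      push_cast at ih1 ih2
      simp only [Polynomial.eval_sub, Polynomial.eval_mul, Polynomial.eval_ofNat,
        Polynomial.eval_X, ih1, ih2]
      have h2c : (2:ℝ) * c = r + s := hradd.symm
      have : r^(n+2) + s^(n+2) = (r+s) * (r^(n+1) + s^(n+1)) - (r*s) * (r^n + s^n) := by
        ring
      rw [hrs] at this
      rw [h2c]
      field_simp
      linarith [this]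
  have hTpos : ∀ n : ℕ, 0 < (Polynomial.Chebyshev.T ℝ n).eval c := by
    intro n; rw [hT]; positivity
  -- the main formula
  have hform : ∀ n : ℕ, ω n = 2 * c * (Polynomial.Chebyshev.T ℝ n).eval c
      / (Polynomial.Chebyshev.T ℝ (n+1)).eval c := by
    intro n
    induction n with
    | zero =>
      simp [hω0, hT 0, hT 1]
      field_simp
    | succ n ih =>
      have hTn := hTpos n
      have hTn1 := hTpos (n+1)
      have hTn2 := hTpos (n+2)
      have hrec3 : (Polynomial.Chebyshev.T ℝ ((n:ℤ)+2)).eval c =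
          2 * c * (Polynomial.Chebyshev.T ℝ ((n:ℤ)+1)).eval c
          - (Polynomial.Chebyshev.T ℝ (n:ℤ)).eval c := by
        rw [Polynomial.Chebyshev.T_add_two]; simp
      have key : 1 - ω n / (4 * c^2) =
          (Polynomial.Chebyshev.T ℝ ((n:ℤ)+2)).eval c
          / (2 * c * (Polynomial.Chebyshev.T ℝ ((n:ℤ)+1)).eval c) := by
        rw [ih, hrec3]
        push_cast at hTn1 ⊢
        field_simp
        ring
      rw [hrec n, key, one_div_div]
      push_cast
      rw [show ((n:ℤ) + 1 + 1) = (n:ℤ) + 2 by ring]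
  refine ⟨?_, hform, ?_⟩
  · intro n
    have hTn := hTpos n
    have hTn1 := hTpos (n+1)
    have hTn2 := hTpos (n+2)
    have hrec3 : (Polynomial.Chebyshev.T ℝ ((n:ℤ)+2)).eval c =
        2 * c * (Polynomial.Chebyshev.T ℝ ((n:ℤ)+1)).eval c
        - (Polynomial.Chebyshev.T ℝ (n:ℤ)).eval c := by
      rw [Polynomial.Chebyshev.T_add_two]; simp
    have key : 1 - ω n / (4 * c^2) =
        (Polynomial.Chebyshev.T ℝ ((n:ℤ)+2)).eval c
        / (2 * c * (Polynomial.Chebyshev.T ℝ ((n:ℤ)+1)).eval c) := by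
      rw [hform n, hrec3]
      push_cast at hTn1 ⊢
      field_simp
      ring
    rw [key]
    push_cast at hTn1 hTn2 ⊢
    positivity
  · -- the limit
    have hωeq : ∀ n : ℕ, ω n = 2 * c * (1 + (s^2)^n) / (r + s * (s^2)^n) := by
      intro n
      have h1' := hT (n+1); push_cast at h1'
      rw [hform n, hT n, h1']
      have hrs2 : r * s^2 = s := by linear_combination s * hrs
      have h1 : r^n + s^n = r^n * (1 + (s^2)^n) := by
        rw [mul_add, mul_one, ← mul_pow, hrs2]
      have h2 : r^(n+1) + s^(n+1) = r^n * (r + s * (s^2)^n) := by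
        have key2 : r^n * (s * (s^2)^n) = s^(n+1) :=
          calc r^n * (s * (s^2)^n) = s * (r * s^2)^n := by rw [mul_pow]; ring
          _ = s^(n+1) := by rw [hrs2]; ring
        rw [mul_add, key2]; ring
      rw [h1, h2]
      have hrn : (0:ℝ) < r^n := by positivity
      have hden : (0:ℝ) < r + s * (s^2)^n := by positivity
      field_simp
    have hlim1 : Tendsto (fun n : ℕ => (s^2)^n) atTop (nhds 0) := by
      apply tendsto_pow_atTop_nhds_zero_of_lt_one (by positivity)
      nlinarith
    have hfinal : (1 : ℝ) + s^2 = 2 * c * (1 + 0) / (r + s * 0) := by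
      have : 2 * c = r + s := hradd.symm
      rw [this]
      field_simp
      nlinarith [hrs]
    rw [show (1 + (c - Real.sqrt (c^2-1))^2) = 2 * c * (1 + (0:ℝ)) / (r + s * 0) from hfinal]
    have : Tendsto (fun n : ℕ => 2 * c * (1 + (s^2)^n) / (r + s * (s^2)^n)) atTop
        (nhds (2 * c * (1 + 0) / (r + s * 0))) := by
      apply Tendsto.div
      · exact (tendsto_const_nhds.mul (tendsto_const_nhds.add hlim1))
      · exact (tendsto_const_nhds.add (tendsto_const_nhds.mul hlim1))
      · simp; positivity
    exact this.congr (fun n => (hωeq n).symm)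
end
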